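/- Total variation requirement implied by an AUROC target: let M and H be probability measures on a measurable space, and suppose some measurable score function f achieves AUROC(f) ≥ ε for some ε ∈ [1/2, 1], where AUROC(f) = P(f(X) > f(Y)) + (1/2)·P(f(X) = f(Y)) for independent X ~ M and Y ~ H. Then TV(M, H) ≥ 1 − √(2(1 − ε)). -/

import Mathlib

open MeasureTheory

/-- Total variation distance between two measures: the supremum over measurable sets `A`
of `|P(A) − Q(A)|`. -/
noncomputable def tvDist {X : Type*} [MeasurableSpace X] (P Q : Measure X) : ℝ :=
  ⨆ A : {A : Set X // MeasurableSet A}, |(P A.1).toReal - (Q A.1).toReal|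

/-- The AUROC of a score function `f` for distinguishing `M` from `H`: the probability that
an independent sample from `M` receives a strictly higher score than a sample from `H`,
plus half the probability of a tie. -/
noncomputable def auroc {X : Type*} [MeasurableSpace X] (M H : Measure X) (f : X → ℝ) : ℝ :=
  ((M.prod H) {p | f p.1 > f p.2}).toReal
    + (1 / 2) * ((M.prod H) {p | f p.1 = f p.2}).toReal

/-!
A Hahn decomposition `s` of `M` against `H` gives the common lower bound
`Λ = M|s + H|sᶜ ≤ M, H`, whose mass falls short of `1` by `M sᶜ - H sᶜ ≤ TV(M, H)`.
Since `Λ ⊗ Λ ≤ M ⊗ H`, the reversed ordering `f x < f y` (ties counted by half) has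
`M ⊗ H`-mass at least its `Λ ⊗ Λ`-mass, which is `Λ(univ)² / 2` by swap symmetry. Hence
`ε ≤ AUROC(f) ≤ 1 - Λ(univ)² / 2`, i.e. `Λ(univ) ≤ √(2(1 - ε))`.
-/

open Set

section

variable {X : Type*} [MeasurableSpace X]

lemma abs_sub_le_tvDist (P Q : Measure X) [IsFiniteMeasure P] [IsFiniteMeasure Q]
    {A : Set X} (hA : MeasurableSet A) : |P.real A - Q.real A| ≤ tvDist P Q := by
  refine le_ciSup (f := fun A : {A : Set X // MeasurableSet A} => |P.real A.1 - Q.real A.1|)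
    ⟨P.real univ + Q.real univ, ?_⟩ ⟨A, hA⟩
  rintro _ ⟨B, rfl⟩
  have hP := measureReal_mono (μ := P) (subset_univ B.1)
  have hQ := measureReal_mono (μ := Q) (subset_univ B.1)
  exact abs_sub_le_iff.mpr ⟨by linarith [measureReal_nonneg (μ := Q) (s := B.1)],
    by linarith [measureReal_nonneg (μ := P) (s := B.1)]⟩

lemma exists_le_le_real_univ_sub_le_tvDist (P Q : Measure X) [IsFiniteMeasure P]
    [IsFiniteMeasure Q] :
    ∃ Λ : Measure X, Λ ≤ P ∧ Λ ≤ Q ∧ P.real univ - Λ.real univ ≤ tvDist P Q := by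
  obtain ⟨s, hs, hPQ, hQP⟩ := exists_isHahnDecomposition P Q
  refine ⟨P.restrict s + Q.restrict sᶜ, ?_, ?_, ?_⟩
  · calc P.restrict s + Q.restrict sᶜ ≤ P.restrict s + P.restrict sᶜ := by gcongr
      _ = P := P.restrict_add_restrict_compl hs
  · calc P.restrict s + Q.restrict sᶜ ≤ Q.restrict s + Q.restrict sᶜ := by gcongr
      _ = Q := Q.restrict_add_restrict_compl hs
  · have hP := measureReal_add_measureReal_compl (μ := P) hs
    have hΛ : (P.restrict s + Q.restrict sᶜ).real univ = P.real s + Q.real sᶜ := by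
      simp [measureReal_def, Measure.add_apply, ENNReal.toReal_add]
    have := abs_sub_le_tvDist P Q hs.compl
    linarith [le_abs_self (P.real sᶜ - Q.real sᶜ)]

lemma auroc_add_auroc_neg (μ ν : Measure X) [IsFiniteMeasure μ] [IsFiniteMeasure ν]
    {f : X → ℝ} (hf : Measurable f) :
    auroc μ ν f + auroc μ ν (-f) = μ.real univ * ν.real univ := by
  have hlt : MeasurableSet {p : X × X | f p.1 < f p.2} :=
    measurableSet_lt (hf.comp measurable_fst) (hf.comp measurable_snd)
  have heq : MeasurableSet {p : X × X | f p.1 = f p.2} :=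
    measurableSet_eq_fun (hf.comp measurable_fst) (hf.comp measurable_snd)
  have hne : {p : X × X | f p.1 > f p.2} ∪ {p | f p.1 < f p.2} = {p | f p.1 = f p.2}ᶜ := by
    ext p
    simp [lt_or_lt_iff_ne, eq_comm]
  have hdisj : Disjoint {p : X × X | f p.1 > f p.2} {p | f p.1 < f p.2} :=
    disjoint_left.mpr fun p (h : f p.2 < f p.1) => h.not_gt
  have hsplit := measureReal_union (μ := μ.prod ν) hdisj hlt
  rw [hne, measureReal_compl heq, ← univ_prod_univ, measureReal_prod_prod] at hsplit
  simp only [auroc, Pi.neg_apply, neg_lt_neg_iff, gt_iff_lt, neg_inj, ← measureReal_def]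
  linarith

lemma auroc_mono {μ μ' ν ν' : Measure X} [IsFiniteMeasure μ'] [IsFiniteMeasure ν']
    (hμ : μ ≤ μ') (hν : ν ≤ ν') (f : X → ℝ) :
    auroc μ ν f ≤ auroc μ' ν' f := by
  unfold auroc
  gcongr <;> exact measure_ne_top _ _

lemma auroc_neg_self (μ : Measure X) [SFinite μ] (f : X → ℝ) :
    auroc μ μ (-f) = auroc μ μ f := by
  have hswap (s : Set (X × X)) : (μ.prod μ) (Prod.swap ⁻¹' s) = (μ.prod μ) s :=
    (Measure.measurePreserving_swap (μ := μ) (ν := μ)).measure_preimage_equiv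
      (f := MeasurableEquiv.prodComm) s
  simp only [auroc, Pi.neg_apply, neg_lt_neg_iff, gt_iff_lt, neg_inj]
  rw [← hswap {p | f p.2 < f p.1}, ← hswap {p | f p.1 = f p.2}]
  simp [eq_comm]

lemma auroc_self (μ : Measure X) [IsFiniteMeasure μ] {f : X → ℝ} (hf : Measurable f) :
    auroc μ μ f = μ.real univ ^ 2 / 2 := by
  have := auroc_add_auroc_neg μ μ hf
  rw [auroc_neg_self] at this
  linarith

lemma auroc_le_mul_sub_sq_div_two {μ ν Λ : Measure X} [IsFiniteMeasure μ] [IsFiniteMeasure ν]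
    (hμ : Λ ≤ μ) (hν : Λ ≤ ν) {f : X → ℝ} (hf : Measurable f) :
    auroc μ ν f ≤ μ.real univ * ν.real univ - Λ.real univ ^ 2 / 2 := by
  have := isFiniteMeasure_of_le ν hν
  have h := auroc_mono hμ hν (-f)
  rw [auroc_self Λ hf.neg] at h
  linarith [auroc_add_auroc_neg μ ν hf]

end

theorem tv_ge_of_auroc_ge_general {X : Type*} [MeasurableSpace X]
    (M H : Measure X) [IsProbabilityMeasure M] [IsProbabilityMeasure H]
    (f : X → ℝ) (hf : Measurable f) (ε : ℝ)
    (hauroc : ε ≤ auroc M H f) :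
    1 - Real.sqrt (2 * (1 - ε)) ≤ tvDist M H := by
  obtain ⟨Λ, hΛM, hΛH, htv⟩ := exists_le_le_real_univ_sub_le_tvDist M H
  have hbound := auroc_le_mul_sub_sq_div_two hΛM hΛH hf
  simp only [probReal_univ, one_mul] at htv hbound
  have : Λ.real univ ≤ Real.sqrt (2 * (1 - ε)) := Real.le_sqrt_of_sq_le (by linarith)
  linarith

/-- **Total variation requirement implied by an AUROC target.** Let `M` and `H` be
probability measures, and suppose some measurable score function `f` achieves
`AUROC(f) ≥ ε` for some `ε ∈ [1/2, 1]`.  Then `TV(M, H) ≥ 1 − √(2(1 − ε))`. -/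
theorem tv_ge_of_auroc_ge {X : Type*} [MeasurableSpace X]
    (M H : Measure X) [IsProbabilityMeasure M] [IsProbabilityMeasure H]
    (f : X → ℝ) (hf : Measurable f) (ε : ℝ) (hε₁ : 1 / 2 ≤ ε) (hε₂ : ε ≤ 1)
    (hauroc : ε ≤ auroc M H f) :
    1 - Real.sqrt (2 * (1 - ε)) ≤ tvDist M H :=
  tv_ge_of_auroc_ge_general M H f hf ε hauroc
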